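/- Let λ be an infinite cardinal, let (X_j)_{j∈J} be a family of nonempty topological spaces, and suppose that all the X_j with at most one exception are GO spaces. Then the product ∏_{j∈J} X_j (with the product topology) is weakly initially λ-compact if and only if every X_j is weakly initially λ-compact. -/

import Mathlib

universe u v

open Set Cardinal Filter Topology TopologicalSpace

section Defs

variable {X : Type u} [LinearOrder X]

/-- A subset `Y` of a linear order `X`, having no maximum, is `lam`-full in `X` on the right
if for every `y ∈ Y` the set `⋃ y' ∈ Y, (y, y')` (intervals computed in `X`)
has cardinality at least `lam`. -/
def FullRight (lam : Cardinal.{u}) (Y : Set X) : Prop :=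
  (¬ ∃ m ∈ Y, ∀ y ∈ Y, y ≤ m) ∧
    ∀ y ∈ Y, lam ≤ #(⋃ y' ∈ Y, Ioo y y')

/-- A subset `Y` of a linear order `X`, having no minimum, is `lam`-full in `X` on the left
if for every `y ∈ Y` the set `⋃ y' ∈ Y, (y', y)` (intervals computed in `X`)
has cardinality at least `lam`. -/
def FullLeft (lam : Cardinal.{u}) (Y : Set X) : Prop :=
  (¬ ∃ m ∈ Y, ∀ y ∈ Y, m ≤ y) ∧
    ∀ y ∈ Y, lam ≤ #(⋃ y' ∈ Y, Ioo y' y)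

/-- The pair `(A, B)` is a gap of the space `X`: `A`, `B` are open, `A ∪ B = X`,
every element of `A` is less than every element of `B`, `A` has no maximum and `B` has
no minimum (`A` or `B` may be empty). -/
def IsGap [TopologicalSpace X] (A B : Set X) : Prop :=
  IsOpen A ∧ IsOpen B ∧ A ∪ B = Set.univ ∧ (∀ a ∈ A, ∀ b ∈ B, a < b) ∧
    (¬ ∃ m ∈ A, ∀ a ∈ A, a ≤ m) ∧ (¬ ∃ m ∈ B, ∀ b ∈ B, m ≤ b)

/-- The pair `(A, B)` is a pseudo-gap of the space `X`: `A`, `B` are open and nonempty,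
`A ∪ B = X`, every element of `A` is less than every element of `B`, and either `A` has a
maximum and `B` has no minimum, or `A` has no maximum and `B` has a minimum. -/
def IsPseudoGap [TopologicalSpace X] (A B : Set X) : Prop :=
  IsOpen A ∧ IsOpen B ∧ A ∪ B = Set.univ ∧ (∀ a ∈ A, ∀ b ∈ B, a < b) ∧
    A.Nonempty ∧ B.Nonempty ∧
    (((∃ m ∈ A, ∀ a ∈ A, a ≤ m) ∧ ¬ ∃ m ∈ B, ∀ b ∈ B, m ≤ b) ∨
      ((¬ ∃ m ∈ A, ∀ a ∈ A, a ≤ m) ∧ ∃ m ∈ B, ∀ b ∈ B, m ≤ b))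

/-- The cofinality of `A`: the least cardinality of a subset of `A` cofinal in `A`. -/
noncomputable def cofinCard (A : Set X) : Cardinal.{u} :=
  sInf {c | ∃ S : Set X, S ⊆ A ∧ (∀ a ∈ A, ∃ s ∈ S, a ≤ s) ∧ c = #S}

/-- The coinitiality of `B`: the least cardinality of a subset of `B` coinitial in `B`. -/
noncomputable def coinitCard (B : Set X) : Cardinal.{u} :=
  sInf {c | ∃ S : Set X, S ⊆ B ∧ (∀ b ∈ B, ∃ s ∈ S, s ≤ b) ∧ c = #S}

/-- `mu` is a type of the gap `(A, B)`: `mu` is the cofinality of `A` or the coinitiality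
of `B`. -/
def IsGapType (mu : Cardinal.{u}) (A B : Set X) : Prop :=
  mu = cofinCard A ∨ mu = coinitCard B

/-- `mu` is the type of the pseudo-gap `(A, B)`: the cofinality of `A` if `B` has a minimum,
the coinitiality of `B` if `A` has a maximum. -/
def IsPseudoGapType (mu : Cardinal.{u}) (A B : Set X) : Prop :=
  ((∃ m ∈ B, ∀ b ∈ B, m ≤ b) ∧ mu = cofinCard A) ∨
    ((∃ m ∈ A, ∀ a ∈ A, a ≤ m) ∧ mu = coinitCard B)

end Defs

/-- A topological space is `[ν, ν]`-compact if every open cover of cardinality at most `ν`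
has a subcover of cardinality less than `ν`. -/
def NuNuCompact (X : Type u) [TopologicalSpace X] (ν : Cardinal.{u}) : Prop :=
  ∀ 𝒰 : Set (Set X), (∀ U ∈ 𝒰, IsOpen U) → ⋃₀ 𝒰 = Set.univ → #𝒰 ≤ ν →
    ∃ 𝒱 ⊆ 𝒰, #𝒱 < ν ∧ ⋃₀ 𝒱 = Set.univ

/-- A topological space is weakly `[ν, ν]`-compact if every open cover of cardinality at
most `ν` has a subfamily of cardinality less than `ν` whose union is dense. -/
def WeakNuNuCompact (X : Type u) [TopologicalSpace X] (ν : Cardinal.{u}) : Prop :=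
  ∀ 𝒰 : Set (Set X), (∀ U ∈ 𝒰, IsOpen U) → ⋃₀ 𝒰 = Set.univ → #𝒰 ≤ ν →
    ∃ 𝒱 ⊆ 𝒰, #𝒱 < ν ∧ Dense (⋃₀ 𝒱)

/-- A topological space is initially `lam`-compact if every open cover of cardinality at
most `lam` has a finite subcover. -/
def InitiallyCompact (X : Type u) [TopologicalSpace X] (lam : Cardinal.{u}) : Prop :=
  ∀ 𝒰 : Set (Set X), (∀ U ∈ 𝒰, IsOpen U) → ⋃₀ 𝒰 = Set.univ → #𝒰 ≤ lam →
    ∃ 𝒱 ⊆ 𝒰, 𝒱.Finite ∧ ⋃₀ 𝒱 = Set.univ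

/-- A topological space is weakly initially `lam`-compact if every open cover of cardinality
at most `lam` has a finite subfamily whose union is dense. -/
def WeakInitiallyCompact (X : Type u) [TopologicalSpace X] (lam : Cardinal.{u}) : Prop :=
  ∀ 𝒰 : Set (Set X), (∀ U ∈ 𝒰, IsOpen U) → ⋃₀ 𝒰 = Set.univ → #𝒰 ≤ lam →
    ∃ 𝒱 ⊆ 𝒰, 𝒱.Finite ∧ Dense (⋃₀ 𝒱)

/-- The sequence `x` `D`-converges to `p`: for every open neighbourhood `U` of `p`,
`{i | x i ∈ U} ∈ D`. -/
def DConv {I : Type v} {X : Type u} [TopologicalSpace X] (D : Ultrafilter I)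
    (x : I → X) (p : X) : Prop :=
  ∀ U : Set X, IsOpen U → p ∈ U → {i | x i ∈ U} ∈ D

/-- `X` is `D`-compact: every `I`-indexed sequence of elements of `X` `D`-converges to some
point of `X`. -/
def DCompact {I : Type v} (D : Ultrafilter I) (X : Type u) [TopologicalSpace X] : Prop :=
  ∀ x : I → X, ∃ p : X, DConv D x p

/-- `p` is a `D`-limit point of the sequence of sets `Y`: for every neighbourhood `U`
of `p`, `{i | U ∩ Y i ≠ ∅} ∈ D`. -/
def DLimitPt {I : Type v} {X : Type u} [TopologicalSpace X] (D : Ultrafilter I)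
    (Y : I → Set X) (p : X) : Prop :=
  ∀ U ∈ nhds p, {i | (U ∩ Y i).Nonempty} ∈ D

/-- `X` is `D`-pseudocompact: every `I`-indexed sequence of nonempty open sets of `X` has a
`D`-limit point. -/
def DPseudocompact {I : Type v} (D : Ultrafilter I) (X : Type u) [TopologicalSpace X] : Prop :=
  ∀ O : I → Set X, (∀ i, IsOpen (O i)) → (∀ i, (O i).Nonempty) → ∃ p : X, DLimitPt D O p

/-- The ultrafilter `D` is `ν`-decomposable: there is `f : I → ν` such that the preimage of
every subset of `ν` of cardinality less than `ν` is not in `D`. -/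
def Decomposable {I : Type v} (D : Ultrafilter I) (ν : Cardinal.{u}) : Prop :=
  ∃ f : I → ν.ord.ToType, ∀ S : Set ν.ord.ToType, #S < ν → f ⁻¹' S ∉ D

/-- A topological space is a GO space if it carries a linear order for which the topology is
Hausdorff and has a base of order-convex sets. -/
def IsGOSpace (X : Type u) [TopologicalSpace X] : Prop :=
  ∃ li : LinearOrder X, T2Space X ∧
    ∃ 𝓑 : Set (Set X), IsTopologicalBasis 𝓑 ∧
      ∀ s ∈ 𝓑, @Set.OrdConnected X li.toPartialOrder.toPreorder s

/-! A weakly initially `λ`-compact GO space `X` is `D`-compact for every ultrafilter `D` on a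
set of size at most `λ`. Reversing the order if necessary, a sequence `x` lies `D`-a.e. in its
cut `B = {b | x ≤ b D-a.e.}`. If `B` has a least element, `x` is `D`-a.e. equal to it; if a
point `m ∉ B` lies in the closure of `B`, convex neighbourhoods of `m` show that `x → m`.
Otherwise `B` is clopen without least element, and a cluster point of the intervals below a
coinitial subset of `B` of size `≤ λ` could lie neither in `B` nor outside it.

For the product, let a cover `𝒰` of size `≤ λ` have no finite subfamily with dense union, and
choose for every finite `F ⊆ 𝒰` a point `f F` outside the closure of `⋃ F`. Weak initial
`λ`-compactness of the exceptional factor `X e` yields an ultrafilter `D` on the finite subsets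
of `𝒰`, finer than `atTop`, and a `D`-limit point of the `e`-slices through `f F` of these
open sets, while the other coordinates of `f F` `D`-converge. Together they give a point whose
neighbourhood `U ∈ 𝒰` meets the complement of the closure of `⋃ F` for some `F ∋ U`. -/

lemma dConv_iff_tendsto {I : Type v} {X : Type u} [TopologicalSpace X] {D : Ultrafilter I}
    {x : I → X} {p : X} : DConv D x p ↔ Tendsto x (D : Filter I) (𝓝 p) := by
  simp only [DConv, (nhds_basis_opens p).tendsto_right_iff, and_imp]
  exact ⟨fun h U hpU hU => h U hU hpU, fun h U hU hpU => h U hpU hU⟩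

namespace WeakInitiallyCompact

variable {lam : Cardinal.{u}}

lemma of_finite {X : Type u} [TopologicalSpace X] [Finite X] : WeakInitiallyCompact X lam :=
  fun 𝒰 _ hcov _ => ⟨𝒰, subset_rfl, toFinite 𝒰, hcov ▸ dense_univ⟩

lemma of_surjective {X Y : Type u} [TopologicalSpace X] [TopologicalSpace Y]
    (h : WeakInitiallyCompact X lam) {f : X → Y} (hf : Continuous f)
    (hsurj : Function.Surjective f) : WeakInitiallyCompact Y lam := by
  intro 𝒰 hopen hcov hcard
  have hcov' : ⋃₀ (preimage f '' 𝒰) = Set.univ := by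
    rw [sUnion_image, ← preimage_iUnion₂, ← sUnion_eq_biUnion, hcov, preimage_univ]
  obtain ⟨𝒱, h𝒱, hfin, hdense⟩ := exists_subset_image_finite_and.1 <|
    h _ (forall_mem_image.2 fun U hU => (hopen U hU).preimage hf) hcov' (mk_image_le.trans hcard)
  refine ⟨𝒱, h𝒱, hfin, ?_⟩
  rw [sUnion_image, ← preimage_iUnion₂, ← sUnion_eq_biUnion] at hdense
  simpa only [image_preimage_eq _ hsurj] using hsurj.denseRange.dense_image hf hdense

variable {Y : Type u} [TopologicalSpace Y] {I : Type u} [Preorder I] [IsDirectedOrder I]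
  [Nonempty I] {O : I → Set Y}

lemma exists_forall_mem_nhds_exists_ge (hY : WeakInitiallyCompact Y lam) (hI : #I ≤ lam)
    (hO : ∀ i, IsOpen (O i)) (hne : ∀ i, (O i).Nonempty) :
    ∃ p, ∀ U ∈ 𝓝 p, ∀ i, ∃ i' ≥ i, (U ∩ O i').Nonempty := by
  by_contra! h
  set V : I → Set Y := fun i => interior {y | ∀ i' ≥ i, y ∉ O i'}
  have hcov : ⋃₀ range V = Set.univ := by
    refine eq_univ_of_forall fun p => ?_
    obtain ⟨U, hU, i, hi⟩ := h p
    refine ⟨V i, mem_range_self i, mem_interior_iff_mem_nhds.2 (mem_of_superset hU ?_)⟩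
    exact fun y hyU i' hi' hyO => (hi i' hi').subset ⟨hyU, hyO⟩
  obtain ⟨S, -, hS, hdense⟩ := exists_subset_image_finite_and.1 <| by
    rw [image_univ]
    exact hY _ (forall_mem_range.2 fun i => isOpen_interior) hcov (mk_range_le.trans hI)
  obtain ⟨i₀, hi₀⟩ := hS.bddAbove
  obtain ⟨y, hyO, _, ⟨s, hs, rfl⟩, hyV⟩ := hdense.inter_open_nonempty _ (hO i₀) (hne i₀)
  exact interior_subset hyV i₀ (hi₀ hs) hyO

lemma exists_ultrafilter_dLimitPt (hY : WeakInitiallyCompact Y lam) (hI : #I ≤ lam)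
    (hO : ∀ i, IsOpen (O i)) (hne : ∀ i, (O i).Nonempty) :
    ∃ (D : Ultrafilter I) (p : Y), (D : Filter I) ≤ atTop ∧ DLimitPt D O p := by
  obtain ⟨p, hp⟩ := hY.exists_forall_mem_nhds_exists_ge hI hO hne
  have hfreq : ∃ᶠ z in 𝓝 p ×ˢ atTop, z.1 ∈ O z.2 := by
    refine frequently_iff.2 fun {W} hW => ?_
    obtain ⟨t, ht, t', ht', hsub⟩ := mem_prod_iff.1 hW
    obtain ⟨i, hi⟩ := mem_atTop_sets.1 ht'
    obtain ⟨i', hii', y, hyt, hyO⟩ := hp t ht i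
    exact ⟨(y, i'), hsub ⟨hyt, hi i' hii'⟩, hyO⟩
  have := frequently_iff_neBot.1 hfreq
  set 𝒲 := Ultrafilter.of (𝓝 p ×ˢ atTop ⊓ 𝓟 {z : Y × I | z.1 ∈ O z.2})
  have h𝒲 : ↑𝒲 ≤ 𝓝 p ×ˢ atTop ⊓ 𝓟 {z : Y × I | z.1 ∈ O z.2} := Ultrafilter.of_le _
  refine ⟨𝒲.map Prod.snd, p, tendsto_snd.mono_left (h𝒲.trans inf_le_left), fun U hU => ?_⟩
  have hmem : ∀ᶠ z in (𝒲 : Filter (Y × I)), (U ∩ O z.2).Nonempty := by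
    filter_upwards [h𝒲 (mem_inf_of_left (tendsto_fst.eventually hU)),
      h𝒲 (mem_inf_of_right (mem_principal_self _))] with z hzU hzO
    exact ⟨z.1, hzU, hzO⟩
  exact hmem

end WeakInitiallyCompact

def HasOrdConnectedNhds (X : Type u) [LinearOrder X] [TopologicalSpace X] : Prop :=
  ∀ a : X, ∀ U ∈ 𝓝 a, ∃ V ∈ 𝓝 a, V.OrdConnected ∧ V ⊆ U

namespace HasOrdConnectedNhds

variable {X : Type u} [LinearOrder X] [TopologicalSpace X]

lemma of_isTopologicalBasis {𝓑 : Set (Set X)} (hb : IsTopologicalBasis 𝓑)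
    (hc : ∀ s ∈ 𝓑, s.OrdConnected) : HasOrdConnectedNhds X := by
  intro a U hU
  obtain ⟨V, hV𝓑, haV, hVU⟩ := hb.mem_nhds_iff.1 hU
  exact ⟨V, hb.mem_nhds hV𝓑 haV, hc V hV𝓑, hVU⟩

lemma dual (hX : HasOrdConnectedNhds X) : HasOrdConnectedNhds Xᵒᵈ := fun a U hU =>
  let ⟨V, hV, hVc, hVU⟩ := hX (OrderDual.ofDual a) U hU
  ⟨V, hV, hVc.dual, hVU⟩

lemma isOpen_Ioi [T1Space X] (hX : HasOrdConnectedNhds X) (a : X) : IsOpen (Ioi a) := by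
  refine isOpen_iff_mem_nhds.2 fun y hy => ?_
  obtain ⟨V, hV, hVc, hVa⟩ := hX y {a}ᶜ (isOpen_compl_singleton.mem_nhds hy.ne')
  refine mem_of_superset hV fun v hv => lt_of_not_ge fun hva => ?_
  exact hVa (hVc.out hv (mem_of_mem_nhds hV) ⟨hva, hy.le⟩) rfl

lemma isOpen_Iio [T1Space X] (hX : HasOrdConnectedNhds X) (a : X) : IsOpen (Iio a) :=
  haveI : T1Space Xᵒᵈ := ‹T1Space X›
  hX.dual.isOpen_Ioi (OrderDual.toDual a)

variable {lam : Cardinal.{u}}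

lemma eq_empty_of_forall_exists_lt [T1Space X] (hX : HasOrdConnectedNhds X)
    (hw : WeakInitiallyCompact X lam) {B C : Set X} (hB : IsUpperSet B) (hBc : IsOpen Bᶜ)
    (hCB : C ⊆ B) (hC : #C ≤ lam) (hlt : ∀ b ∈ B, ∃ c ∈ C, c < b) : B = ∅ := by
  refine eq_empty_iff_forall_notMem.2 fun b hb => ?_
  have hBo : IsOpen B := isOpen_iff_mem_nhds.2 fun b hb =>
    let ⟨c, hc, hcb⟩ := hlt b hb
    mem_of_superset ((hX.isOpen_Ioi c).mem_nhds hcb) fun _ hy => hB hy.le (hCB hc)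
  obtain ⟨c₀, hc₀, -⟩ := hlt b hb
  have : Nonempty Cᵒᵈ := ⟨OrderDual.toDual ⟨c₀, hc₀⟩⟩
  -- a cluster point of the intervals below `c ∈ C`, as `c` decreases
  obtain ⟨p, hp⟩ := hw.exists_forall_mem_nhds_exists_ge (I := Cᵒᵈ) hC
    (O := fun c => Iio ((OrderDual.ofDual c : C) : X) ∩ B) (fun c => (hX.isOpen_Iio _).inter hBo)
    (fun c => let ⟨c', hc', hc'c⟩ := hlt _ (hCB (OrderDual.ofDual c).2); ⟨c', hc'c, hCB hc'⟩)
  by_cases hpB : p ∈ B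
  · obtain ⟨c, hc, hcp⟩ := hlt p hpB
    obtain ⟨c', hc'c, y, hcy, hyc', -⟩ :=
      hp (Ioi c) ((hX.isOpen_Ioi c).mem_nhds hcp) (OrderDual.toDual ⟨c, hc⟩)
    exact (hcy.trans (hyc'.trans_le hc'c)).false
  · obtain ⟨-, -, y, hyB, -, hy⟩ := hp Bᶜ (hBc.mem_nhds hpB) (OrderDual.toDual ⟨c₀, hc₀⟩)
    exact hyB hy

lemma dConv_of_mem_closure (hX : HasOrdConnectedNhds X) {I : Type v} (D : Ultrafilter I)
    (x : I → X) {m : X} (hm : m ∈ closure {b | ∀ᶠ j in D, x j ≤ b})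
    (hmB : ¬ ∀ᶠ j in D, x j ≤ m) : DConv D x m := by
  rw [dConv_iff_tendsto, tendsto_def]
  intro U hU
  obtain ⟨V, hV, hVc, hVU⟩ := hX m U hU
  obtain ⟨b, hbV, hb⟩ := mem_closure_iff_nhds.1 hm V hV
  have hmx : ∀ᶠ j in D, m < x j := by
    simpa only [not_le] using Ultrafilter.eventually_not.2 hmB
  filter_upwards [hmx, hb] with j hmj hjb
  exact hVU (hVc.out (mem_of_mem_nhds hV) hbV ⟨hmj.le, hjb⟩)

lemma exists_dConv_of_eventually_le [T1Space X] (hX : HasOrdConnectedNhds X)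
    (hw : WeakInitiallyCompact X lam) {I : Type u} (hI : #I ≤ lam) (D : Ultrafilter I)
    (x : I → X) (hx : ∀ᶠ i in D, ∀ᶠ j in D, x j ≤ x i) : ∃ p, DConv D x p := by
  set B := {b | ∀ᶠ j in D, x j ≤ b}
  by_cases hBc : IsClosed B
  · by_cases hmin : ∃ b, IsLeast B b
    · obtain ⟨b, hbB, hb⟩ := hmin
      refine ⟨b, dConv_iff_tendsto.2 (tendsto_nhds_of_eventually_eq ?_)⟩
      filter_upwards [hx, hbB] with i hi hib using le_antisymm hib (hb hi)
    · have hlt : ∀ b ∈ B, ∃ c ∈ B ∩ range x, c < b := by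
        intro b hb
        obtain ⟨b', hb', hb'b⟩ : ∃ b' ∈ B, b' < b := by
          by_contra! h
          exact hmin ⟨b, hb, h⟩
        obtain ⟨i, hi, hib'⟩ := (hx.and hb').exists
        exact ⟨x i, ⟨hi, mem_range_self i⟩, hib'.trans_lt hb'b⟩
      have hB : B = ∅ := hX.eq_empty_of_forall_exists_lt hw
        (fun _ _ hab ha => ha.mono fun _ hj => hj.trans hab) hBc.isOpen_compl
        inter_subset_left ((mk_le_mk_of_subset inter_subset_right).trans (mk_range_le.trans hI))
        hlt
      obtain ⟨i, hi⟩ := hx.exists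
      exact (eq_empty_iff_forall_notMem.1 hB (x i) hi).elim
  · rw [← closure_subset_iff_isClosed, not_subset] at hBc
    obtain ⟨m, hm, hmB⟩ := hBc
    exact ⟨m, hX.dConv_of_mem_closure D x hm hmB⟩

lemma dCompact [T1Space X] (hX : HasOrdConnectedNhds X) (hw : WeakInitiallyCompact X lam)
    {I : Type u} (hI : #I ≤ lam) (D : Ultrafilter I) : DCompact D X := by
  intro x
  by_cases hx : ∀ᶠ i in D, ∀ᶠ j in D, x j ≤ x i
  · exact hX.exists_dConv_of_eventually_le hw hI D x hx
  · have : T1Space Xᵒᵈ := ‹T1Space X›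
    have hx' : ∀ᶠ i in D, ∀ᶠ j in D, OrderDual.toDual (x j) ≤ OrderDual.toDual (x i) := by
      filter_upwards [Ultrafilter.eventually_not.2 hx] with i hi
      filter_upwards [Ultrafilter.eventually_not.2 hi] with j hj using (not_le.1 hj).le
    obtain ⟨p, hp⟩ := hX.dual.exists_dConv_of_eventually_le hw hI D _ hx'
    exact ⟨OrderDual.ofDual p, hp⟩

end HasOrdConnectedNhds

lemma IsGOSpace.dCompact {X : Type u} [TopologicalSpace X] {lam : Cardinal.{u}}
    (hX : IsGOSpace X) (hw : WeakInitiallyCompact X lam) {I : Type u} (hI : #I ≤ lam)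
    (D : Ultrafilter I) : DCompact D X := by
  obtain ⟨_, _, 𝓑, hb, hc⟩ := hX
  exact (HasOrdConnectedNhds.of_isTopologicalBasis hb hc).dCompact hw hI D

lemma exists_dLimitPt_pi {J : Type*} [DecidableEq J] {X : J → Type*}
    [∀ j, TopologicalSpace (X j)] {I : Type*} (D : Ultrafilter I) (e : J)
    (hD : ∀ j ≠ e, DCompact D (X j)) {O : I → Set (∀ j, X j)} (f : I → ∀ j, X j) {pe : X e}
    (hpe : DLimitPt D (fun i => {z | Function.update (f i) e z ∈ O i}) pe) :
    ∃ p, DLimitPt D O p := by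
  have hq : ∀ j, ∃ q : X j, j ≠ e → DConv D (fun i => f i j) q := by
    intro j
    by_cases hj : j = e
    · subst hj
      exact ⟨pe, fun h => (h rfl).elim⟩
    · exact (hD j hj _).imp fun _ hq _ => hq
  choose q hq using hq
  set p := Function.update q e pe
  have hg : Tendsto (fun i => Function.update (f i) e pe) D (𝓝 p) := by
    refine tendsto_pi_nhds.2 fun j => ?_
    by_cases hj : j = e
    · subst hj
      simpa [p] using tendsto_const_nhds
    · simpa [p, hj] using dConv_iff_tendsto.1 (hq j hj)
  have hupd : Tendsto (fun z : X e × (∀ j, X j) => Function.update z.2 e z.1)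
      (𝓝 pe ×ˢ 𝓝 p) (𝓝 p) := by
    rw [← nhds_prod_eq]
    simpa [p] using (continuous_snd.update e continuous_fst).tendsto (pe, p)
  refine ⟨p, fun U hU => ?_⟩
  obtain ⟨t, ht, t', ht', hsub⟩ := mem_prod_iff.1 (hupd hU)
  filter_upwards [hpe t ht, hg ht'] with i ⟨z, hzt, hzO⟩ hgi
  exact ⟨_, hsub (mk_mem_prod hzt hgi), by simpa using hzO⟩

theorem WeakInitiallyCompact.pi {J : Type u} {X : J → Type u} [∀ j, TopologicalSpace (X j)]
    {lam : Cardinal.{u}} (e : J) (he : WeakInitiallyCompact (X e) lam)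
    (hD : ∀ j ≠ e, ∀ {I : Type u}, #I ≤ lam → ∀ D : Ultrafilter I, DCompact D (X j)) :
    WeakInitiallyCompact (∀ j, X j) lam := by
  classical
  intro 𝒰 hopen hcov hcard
  by_contra! hcon
  have : Infinite 𝒰 := Set.infinite_coe_iff.2 fun hfin =>
    hcon 𝒰 subset_rfl hfin (hcov ▸ dense_univ)
  have hI : #(Finset 𝒰) ≤ lam := (mk_finset_of_infinite 𝒰).trans_le hcard
  set W : Finset 𝒰 → Set (∀ j, X j) := fun F => (closure (⋃ U ∈ F, (U : Set (∀ j, X j))))ᶜ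
  have hW : ∀ F, (W F).Nonempty := fun F => by
    refine nonempty_compl.2 fun h => hcon (Subtype.val '' (F : Set 𝒰))
      (image_subset_iff.2 fun U _ => U.2) (F.finite_toSet.image _) ?_
    rwa [sUnion_image, dense_iff_closure_eq]
  choose f hf using hW
  obtain ⟨D, pe, hDtop, hpe⟩ := he.exists_ultrafilter_dLimitPt hI
    (O := fun F => {z | Function.update (f F) e z ∈ W F})
    (fun F => isClosed_closure.isOpen_compl.preimage (continuous_const.update e continuous_id))
    (fun F => ⟨f F e, by simpa using hf F⟩)
  obtain ⟨p, hp⟩ := exists_dLimitPt_pi D e (fun j hj => hD j hj hI D) f hpe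
  obtain ⟨U, hU𝒰, hpU⟩ := hcov ▸ mem_univ p
  have hpU' : ∀ᶠ F in (D : Filter (Finset 𝒰)), (U ∩ W F).Nonempty :=
    hp U ((hopen U hU𝒰).mem_nhds hpU)
  obtain ⟨F, ⟨y, hyU, hyW⟩, hUF⟩ := (hpU'.and (hDtop (eventually_ge_atTop {⟨U, hU𝒰⟩}))).exists
  exact hyW (subset_closure (mem_biUnion (hUF (Finset.mem_singleton_self _)) hyU))

theorem stmt18_general (lam : Cardinal.{u})
    (J : Type u) (X : J → Type u) [∀ j, TopologicalSpace (X j)]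
    (hne : ∀ j, Nonempty (X j))
    (hGO : ∃ E : Set J, E.Subsingleton ∧ ∀ j ∉ E, IsGOSpace (X j)) :
    WeakInitiallyCompact (∀ j, X j) lam ↔ ∀ j, WeakInitiallyCompact (X j) lam := by
  refine ⟨fun h j => h.of_surjective (continuous_apply j) (@Function.surjective_eval _ _ hne j),
    fun h => ?_⟩
  rcases isEmpty_or_nonempty J with hJ | ⟨⟨j₀⟩⟩
  · exact WeakInitiallyCompact.of_finite
  obtain ⟨E, hE, hGO⟩ := hGO
  obtain ⟨e, hEe⟩ : ∃ e, E ⊆ {e} := by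
    rcases hE.eq_empty_or_singleton with rfl | ⟨e, rfl⟩
    exacts [⟨j₀, empty_subset _⟩, ⟨e, subset_rfl⟩]
  exact WeakInitiallyCompact.pi e (h e) fun j hj I hI D =>
    (hGO j fun hjE => hj (hEe hjE)).dCompact (h j) hI D

/-- If all factors with at most one exception are GO spaces, the product is weakly initially
`lam`-compact iff every factor is. -/
theorem stmt18 (lam : Cardinal.{u}) (hlam : ℵ₀ ≤ lam)
    (J : Type u) (X : J → Type u) [∀ j, TopologicalSpace (X j)]
    (hne : ∀ j, Nonempty (X j))
    (hGO : ∃ E : Set J, E.Subsingleton ∧ ∀ j ∉ E, IsGOSpace (X j)) :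
    WeakInitiallyCompact (∀ j, X j) lam ↔ ∀ j, WeakInitiallyCompact (X j) lam :=
  stmt18_general lam J X hne hGO
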